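/- arXiv:2305.11119 — 6 statements merged into one kernel-verified Lean document; each statement's English description precedes it below -/
import Mathlib

section
/- If a bounded above acyclic complex of injective right S-modules has the property that it is of the form F•⁺ for a bounded below acyclic complex F• of flat left S-modules (applying the character module functor termwise), and all its cocycle modules are injective, then all the cocycle modules of F• are flat; consequently, if every bounded above acyclic complex of injective right S-modules is contractible, then every bounded below acyclic complex of flat left S-modules is pure acyclic. -/
open TensorProduct

universe w

section NoncommFlat

variable (S : Type*) [Ring S]

/-- The subgroup of relations defining the tensor product `M ⊗_S N` of a right `S`-module `M`
and a left `S`-module `N` over a (possibly noncommutative) ring `S`. -/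
noncomputable def tensorRel (M : Type*) [AddCommGroup M] [Module Sᵐᵒᵖ M]
    (N : Type*) [AddCommGroup N] [Module S N] : AddSubgroup (M ⊗[ℤ] N) :=
  AddSubgroup.closure {x | ∃ (m : M) (s : S) (n : N),
    x = (MulOpposite.op s • m) ⊗ₜ[ℤ] n - m ⊗ₜ[ℤ] (s • n)}

/-- The tensor product `M ⊗_S N` of a right `S`-module `M` and a left `S`-module `N` over
a (possibly noncommutative) ring `S`, as an abelian group. -/
def TensorOver (M : Type*) [AddCommGroup M] [Module Sᵐᵒᵖ M]
    (N : Type*) [AddCommGroup N] [Module S N] : Type _ :=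
  (M ⊗[ℤ] N) ⧸ tensorRel S M N

noncomputable instance (M : Type*) [AddCommGroup M] [Module Sᵐᵒᵖ M]
    (N : Type*) [AddCommGroup N] [Module S N] : AddCommGroup (TensorOver S M N) :=
  QuotientAddGroup.Quotient.addCommGroup _

/-- The map `M ⊗_S N → M' ⊗_S N` induced by a morphism of right `S`-modules `f : M → M'`. -/
noncomputable def tensorMap {M M' : Type*} [AddCommGroup M] [Module Sᵐᵒᵖ M]
    [AddCommGroup M'] [Module Sᵐᵒᵖ M'] (f : M →ₗ[Sᵐᵒᵖ] M')
    (N : Type*) [AddCommGroup N] [Module S N] :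
    TensorOver S M N →+ TensorOver S M' N :=
  QuotientAddGroup.map _ _
    ((TensorProduct.map f.toAddMonoidHom.toIntLinearMap (LinearMap.id (R := ℤ) (M := N))).toAddMonoidHom)
    (by
      refine (AddSubgroup.closure_le _).2 ?_
      rintro x ⟨m, s, n, rfl⟩
      rw [SetLike.mem_coe, AddSubgroup.mem_comap]
      have h2 : ∀ a : M, f.toAddMonoidHom.toIntLinearMap a = f a := fun _ => rfl
      simp only [LinearMap.toAddMonoidHom_coe, map_sub, TensorProduct.map_tmul, h2,
        map_smul, LinearMap.id_coe, id_eq]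
      exact AddSubgroup.subset_closure ⟨f m, s, n, rfl⟩)

/-- A left `S`-module `N` over a (possibly noncommutative) ring `S` is flat if tensoring
with `N` over `S` preserves injectivity of maps of right `S`-modules. -/
def IsFlatMod (N : Type*) [AddCommGroup N] [Module S N] : Prop :=
  ∀ ⦃M M' : Type w⦄ [AddCommGroup M] [Module Sᵐᵒᵖ M] [AddCommGroup M'] [Module Sᵐᵒᵖ M']
    (f : M →ₗ[Sᵐᵒᵖ] M'), Function.Injective f → Function.Injective (tensorMap S f N)

end NoncommFlat

/-- The natural right `S`-module (i.e. `Sᵐᵒᵖ`-module) structure on the character module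
`F⁺ = Hom_ℤ(F, ℚ/ℤ)` of a left `S`-module `F`, given by `(f • s) m = f (s • m)`. -/
noncomputable instance CharacterModule.moduleOp (S : Type*) [Ring S]
    (F : Type*) [AddCommGroup F] [Module S F] :
    Module Sᵐᵒᵖ (CharacterModule F) where
  smul s f := f.comp (DistribSMul.toAddMonoidHom F s.unop)
  one_smul f := by
    ext m; change f ((1 : Sᵐᵒᵖ).unop • m) = f m; simp
  mul_smul s t f := by
    ext m
    change f ((s * t).unop • m) = f (t.unop • s.unop • m)
    rw [← mul_smul]; rfl
  smul_zero s := by ext m; rfl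
  smul_add s f g := by ext m; rfl
  add_smul s t f := by
    ext m
    change f ((s + t).unop • m) = f (s.unop • m) + f (t.unop • m)
    rw [MulOpposite.unop_add, add_smul, map_add]
  zero_smul f := by
    ext m; change f ((0 : Sᵐᵒᵖ).unop • m) = 0; simp

/-- The map of character modules (as right `S`-modules) induced by a map of left `S`-modules. -/
noncomputable def dualMapOp {S : Type*} [Ring S] {M N : Type*} [AddCommGroup M] [Module S M]
    [AddCommGroup N] [Module S N] (f : M →ₗ[S] N) :
    CharacterModule N →ₗ[Sᵐᵒᵖ] CharacterModule M where
  toFun L := L.comp f.toAddMonoidHom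
  map_add' _ _ := by ext m; rfl
  map_smul' s L := by
    ext m
    change L (s.unop • f m) = L (f (s.unop • m))
    rw [f.map_smul]


/-!
Lambek duality: a left module `N` is flat iff `N⁺` is injective, by the adjunction
`(M ⊗_S N)⁺ ≃ Hom(M, N⁺)` and the injectivity of `ℚ/ℤ`. In an acyclic complex the cocycles
`Z^{n+2} = B^{n+2} ≅ F^{n+1} / B^{n+1}` have as character module the characters of `F^{n+1}`
killed by `d^n`, i.e. a cocycle module of the dual complex; so injective dual cocycles make
the cocycles of `F•` flat. For the second part, the dual of a bounded below acyclic flat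
complex is a bounded above acyclic complex of injectives, and when it is contractible its
cocycles are retracts of its terms, hence injective.
-/

open CategoryTheory CategoryTheory.Limits

section InjectiveModules

universe v

theorem Module.Injective.of_retract {R : Type*} [Ring R] {A B : Type v} [AddCommGroup A]
    [Module R A] [AddCommGroup B] [Module R B] (s : A →ₗ[R] B) (r : B →ₗ[R] A)
    (hrs : r ∘ₗ s = LinearMap.id) (hB : Module.Injective R B) : Module.Injective R A where
  out _ _ _ _ _ _ f hf g := by
    obtain ⟨k, hk⟩ := hB.out f hf (s ∘ₗ g)
    exact ⟨r ∘ₗ k, fun x => by simp [hk x, ← LinearMap.comp_apply r s, hrs]⟩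

theorem Module.Injective.of_linearEquiv {R : Type*} [Ring R] {A B : Type v} [AddCommGroup A]
    [Module R A] [AddCommGroup B] [Module R B] (e : A ≃ₗ[R] B) (hA : Module.Injective R A) :
    Module.Injective R B :=
  hA.of_retract e.symm.toLinearMap e.toLinearMap (by ext; simp)

theorem Module.Injective.of_subsingleton (R : Type*) [Ring R] (Q : Type*) [AddCommGroup Q]
    [Module R Q] [Subsingleton Q] : Module.Injective R Q :=
  Module.Baer.injective fun _ _ => ⟨0, fun _ _ => Subsingleton.elim _ _⟩

end InjectiveModules

instance CharacterModule.instSubsingleton (A : Type*) [AddCommGroup A] [Subsingleton A] :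
    Subsingleton (CharacterModule A) :=
  ⟨fun c c' => DFunLike.ext _ _ fun x => by rw [Subsingleton.elim x 0, map_zero, map_zero]⟩

theorem CharacterModule.exists_comp_eq_of_ker_le {B C : Type*} [AddCommGroup B] [AddCommGroup C]
    (p : B →+ C) (L : CharacterModule B) (hL : p.ker ≤ AddMonoidHom.ker L) :
    ∃ L' : CharacterModule C, L'.comp p = L := by
  obtain ⟨L', hL'⟩ := (Module.Baer.of_divisible _).extension_property_addMonoidHom
    (QuotientAddGroup.kerLift p) (QuotientAddGroup.kerLift_injective p)
    (QuotientAddGroup.lift _ L hL)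
  exact ⟨L', AddMonoidHom.ext fun b => DFunLike.congr_fun hL' (b : B ⧸ p.ker)⟩

section DualMapOp

variable {S : Type*} [Ring S] {A B C : Type*} [AddCommGroup A] [Module S A]
  [AddCommGroup B] [Module S B] [AddCommGroup C] [Module S C]

@[simp] lemma dualMapOp_apply (f : A →ₗ[S] B) (L : CharacterModule B) (a : A) :
    dualMapOp f L a = L (f a) := rfl

lemma dualMapOp_zero : dualMapOp (0 : A →ₗ[S] B) = 0 := by
  ext L a; exact map_zero L

lemma dualMapOp_comp (f : A →ₗ[S] B) (g : B →ₗ[S] C) :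
    dualMapOp (g ∘ₗ f) = dualMapOp f ∘ₗ dualMapOp g := rfl

noncomputable def dualEquivOp (e : A ≃ₗ[S] B) : CharacterModule B ≃ₗ[Sᵐᵒᵖ] CharacterModule A :=
  LinearEquiv.ofLinearMap (dualMapOp e.toLinearMap) (dualMapOp e.symm.toLinearMap)
    (by ext L b; simp) (by ext L a; simp)

theorem ker_dualMapOp_eq_range_dualMapOp {f : A →ₗ[S] B} {g : B →ₗ[S] C}
    (hfg : LinearMap.ker g = LinearMap.range f) :
    LinearMap.ker (dualMapOp f) = LinearMap.range (dualMapOp g) := by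
  ext L
  constructor
  · intro hL
    have hker : g.toAddMonoidHom.ker ≤ AddMonoidHom.ker L := by
      intro b hb
      obtain ⟨a, rfl⟩ : b ∈ LinearMap.range f := hfg ▸ hb
      exact DFunLike.congr_fun hL a
    exact CharacterModule.exists_comp_eq_of_ker_le _ L hker
  · rintro ⟨L', rfl⟩
    ext a
    have : f a ∈ LinearMap.ker g := hfg ▸ LinearMap.mem_range_self f a
    exact (congrArg L' (LinearMap.mem_ker.1 this)).trans (map_zero L')

end DualMapOp

namespace TensorOver

variable {S : Type*} [Ring S] {M M' : Type*} [AddCommGroup M] [Module Sᵐᵒᵖ M]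
  [AddCommGroup M'] [Module Sᵐᵒᵖ M'] {N : Type*} [AddCommGroup N] [Module S N]

noncomputable def mk (m : M) (n : N) : TensorOver S M N :=
  QuotientAddGroup.mk (m ⊗ₜ[ℤ] n)

lemma mk_add_left (m m' : M) (n : N) : mk (S := S) (m + m') n = mk m n + mk m' n := by
  simp only [mk, TensorProduct.add_tmul]; rfl

lemma mk_add_right (m : M) (n n' : N) : mk (S := S) m (n + n') = mk m n + mk m n' := by
  simp only [mk, TensorProduct.tmul_add]; rfl

lemma mk_zero_right (m : M) : mk (S := S) (N := N) m 0 = 0 := by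
  simp only [mk, TensorProduct.tmul_zero]; rfl

lemma mk_op_smul (m : M) (s : S) (n : N) :
    mk (S := S) (MulOpposite.op s • m) n = mk m (s • n) :=
  (QuotientAddGroup.eq_iff_sub_mem).2 (AddSubgroup.subset_closure ⟨m, s, n, rfl⟩)

lemma tensorMap_mk (f : M →ₗ[Sᵐᵒᵖ] M') (m : M) (n : N) :
    tensorMap S f N (mk m n) = mk (f m) n :=
  congrArg QuotientAddGroup.mk (TensorProduct.map_tmul _ _ _ _)

lemma addMonoidHom_ext {A : Type*} [AddCommGroup A] {φ ψ : TensorOver S M N →+ A}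
    (h : ∀ m n, φ (mk m n) = ψ (mk m n)) : φ = ψ := by
  refine QuotientAddGroup.addMonoidHom_ext _ (AddMonoidHom.toIntLinearMap_injective ?_)
  exact TensorProduct.ext' h

noncomputable def characterEquiv :
    CharacterModule (TensorOver S M N) ≃ (M →ₗ[Sᵐᵒᵖ] CharacterModule N) where
  toFun χ :=
    { toFun := fun m =>
        { toFun := fun n => χ (mk m n)
          map_zero' := by rw [mk_zero_right, map_zero]
          map_add' := fun n n' => by rw [mk_add_right, map_add] }
      map_add' := fun m m' => by
        ext n
        exact (congrArg χ (mk_add_left m m' n)).trans (map_add _ _ _)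
      map_smul' := fun s m => by
        ext n
        show χ (mk (s • m) n) = χ (mk m (s.unop • n))
        rw [← mk_op_smul, MulOpposite.op_unop] }
  invFun g := QuotientAddGroup.lift _
    (TensorProduct.liftAddHom (g.toAddMonoidHom : M →+ N →+ AddCircle (1 : ℚ))
      fun z m n => by
        show g (z • m) n = g m (z • n)
        rw [map_zsmul, map_zsmul]; rfl)
    (by
      refine (AddSubgroup.closure_le _).2 ?_
      rintro _ ⟨m, s, n, rfl⟩
      rw [SetLike.mem_coe, AddMonoidHom.mem_ker, map_sub, sub_eq_zero]
      exact DFunLike.congr_fun (g.map_smul (MulOpposite.op s) m) n)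
  left_inv χ := addMonoidHom_ext fun m n => rfl
  right_inv g := rfl

lemma characterEquiv_comp_tensorMap (χ : CharacterModule (TensorOver S M' N))
    (f : M →ₗ[Sᵐᵒᵖ] M') :
    characterEquiv (χ.comp (tensorMap S f N)) = characterEquiv χ ∘ₗ f := by
  ext m n
  exact congrArg χ (tensorMap_mk f m n)

end TensorOver

section Lambek

universe u v

variable {S : Type u} [Ring S] {N : Type v} [AddCommGroup N] [Module S N]

open TensorOver

theorem isFlatMod_of_injective_characterModule [Small.{v} S]
    (hN : Module.Injective Sᵐᵒᵖ (CharacterModule N)) : IsFlatMod.{w} S N := by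
  intro M M' _ _ _ _ f hf
  have : Small.{v} Sᵐᵒᵖ := small_of_injective MulOpposite.unop_injective
  refine (injective_iff_map_eq_zero _).2 fun x hx => ?_
  refine CharacterModule.eq_zero_of_character_apply fun χ => ?_
  obtain ⟨g, hg⟩ := Module.Injective.extension_property Sᵐᵒᵖ _ _ _ f hf (characterEquiv χ)
  have hχ : χ = (characterEquiv.symm g).comp (tensorMap S f N) :=
    characterEquiv.injective (by rw [characterEquiv_comp_tensorMap, Equiv.apply_symm_apply, hg])
  rw [hχ]
  exact (congrArg (characterEquiv.symm g) hx).trans (map_zero _)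

theorem injective_characterModule_of_isFlatMod (hN : IsFlatMod.{u} S N) :
    Module.Injective Sᵐᵒᵖ (CharacterModule N) := by
  refine Module.Baer.injective fun I g => ?_
  obtain ⟨χ, hχ⟩ : ∃ χ : CharacterModule (TensorOver S Sᵐᵒᵖ N),
      χ.comp (tensorMap S I.subtype N) = characterEquiv.symm g :=
    (Module.Baer.of_divisible _).extension_property_addMonoidHom
      (tensorMap S I.subtype N) (hN I.subtype I.injective_subtype) (characterEquiv.symm g)
  have hext : characterEquiv χ ∘ₗ I.subtype = g := by
    rw [← characterEquiv_comp_tensorMap, hχ, Equiv.apply_symm_apply]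
  exact ⟨characterEquiv χ, fun x hx => LinearMap.congr_fun hext ⟨x, hx⟩⟩

end Lambek

section DualCocycles

universe v

variable {S : Type*} [Ring S] {B C : Type v} {A D : Type*} [AddCommGroup A] [Module S A]
  [AddCommGroup B] [Module S B] [AddCommGroup C] [Module S C] [AddCommGroup D] [Module S D]

lemma dualMapOp_injective {p : B →ₗ[S] C} (hp : Function.Surjective p) :
    Function.Injective (dualMapOp p) := fun L L' h =>
  DFunLike.ext _ _ fun c => by
    obtain ⟨b, rfl⟩ := hp c
    exact DFunLike.congr_fun h b

noncomputable def characterModuleRangeEquiv {f : A →ₗ[S] B} {g : B →ₗ[S] C}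
    (hfg : LinearMap.ker g = LinearMap.range f) :
    CharacterModule (LinearMap.range g) ≃ₗ[Sᵐᵒᵖ] LinearMap.ker (dualMapOp f) :=
  (LinearEquiv.ofInjective _ (dualMapOp_injective g.surjective_rangeRestrict)).trans
    (LinearEquiv.ofEq _ _
      (ker_dualMapOp_eq_range_dualMapOp (by rwa [LinearMap.ker_rangeRestrict])).symm)

theorem injective_characterModule_ker {f : A →ₗ[S] B} {g : B →ₗ[S] C} {h : C →ₗ[S] D}
    (hfg : LinearMap.ker g = LinearMap.range f) (hgh : LinearMap.ker h = LinearMap.range g)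
    (hf : Module.Injective Sᵐᵒᵖ (LinearMap.ker (dualMapOp f))) :
    Module.Injective Sᵐᵒᵖ (CharacterModule (LinearMap.ker h)) :=
  hf.of_linearEquiv ((characterModuleRangeEquiv hfg).symm.trans
    (dualEquivOp (LinearEquiv.ofEq _ _ hgh)))

end DualCocycles

section Homotopy

universe v

variable {R : Type*} [Ring R] {ι : Type*} {c : ComplexShape ι}

/-- A contraction `h` exhibits the cocycles in degree `j` as a retract of `J.X i`:
`z = d (h z)` for every cocycle `z`. -/
theorem Homotopy.injective_ker_d {J : HomologicalComplex (ModuleCat.{v} R) c}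
    (ht : Homotopy (𝟙 J) 0) {i j k : ι} (hij : c.Rel i j) (hjk : c.Rel j k)
    (hJ : Module.Injective R (J.X i)) : Module.Injective R (LinearMap.ker (J.d j k).hom) := by
  refine hJ.of_retract ((ht.hom j i).hom ∘ₗ (LinearMap.ker (J.d j k).hom).subtype)
    ((J.d i j).hom.codRestrict _ fun x => ?_) ?_
  · rw [LinearMap.mem_ker, ← LinearMap.comp_apply, ← ModuleCat.hom_comp, J.d_comp_d]
    rfl
  · ext ⟨z, hz⟩
    have hcomm := congrArg (fun φ => φ.hom z) (ht.comm j)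
    simp only [dNext_eq _ hjk, prevD_eq _ hij, HomologicalComplex.id_f,
      HomologicalComplex.zero_f_apply, ModuleCat.hom_add, ModuleCat.hom_comp,
      ModuleCat.hom_id, LinearMap.add_apply, LinearMap.comp_apply, LinearMap.id_apply,
      LinearMap.mem_ker.1 hz, map_zero, zero_add, add_zero] at hcomm
    exact hcomm.symm

end Homotopy

namespace CochainComplex

universe v

variable {S : Type*} [Ring S]

/-- Degree `n` is `(F^{-n})⁺`, so that the termwise dual is again a cochain complex. -/
noncomputable def characterDual (F : CochainComplex (ModuleCat.{v} S) ℤ) :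
    CochainComplex (ModuleCat.{v} Sᵐᵒᵖ) ℤ where
  X n := ModuleCat.of Sᵐᵒᵖ (CharacterModule (F.X (-n)))
  d i j := ModuleCat.ofHom (dualMapOp (F.d (-j) (-i)).hom)
  shape i j hij := by
    rw [F.shape (-j) (-i) (by simp only [ComplexShape.up_Rel] at hij ⊢; omega),
      ModuleCat.hom_zero, dualMapOp_zero]
    rfl
  d_comp_d' i j k _ _ := by
    rw [← ModuleCat.ofHom_comp, ← dualMapOp_comp, ← ModuleCat.hom_comp, F.d_comp_d,
      ModuleCat.hom_zero, dualMapOp_zero]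
    rfl

variable (F : CochainComplex (ModuleCat.{v} S) ℤ)

lemma ker_d_eq_range_d {i j k : ℤ} (hF : F.ExactAt j) (hij : i + 1 = j) (hjk : j + 1 = k) :
    LinearMap.ker (F.d j k).hom = LinearMap.range (F.d i j).hom :=
  ((F.exactAt_iff' i j k (by rw [prev]; omega) (by rw [next, hjk])).1
    hF).moduleCat_range_eq_ker.symm

lemma exactAt_of_ker_d_eq_range_d {i j k : ℤ} (hij : i + 1 = j) (hjk : j + 1 = k)
    (h : LinearMap.ker (F.d j k).hom = LinearMap.range (F.d i j).hom) : F.ExactAt j :=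
  (F.exactAt_iff' i j k (by rw [prev]; omega) (by rw [next, hjk])).2
    (ShortComplex.Exact.moduleCat_of_range_eq_ker _ _ h.symm)

lemma isZero_characterDual_X {n : ℤ} (hF : IsZero (F.X (-n))) : IsZero (F.characterDual.X n) :=
  have := ModuleCat.subsingleton_of_isZero hF
  ModuleCat.isZero_of_iff_subsingleton.2 inferInstance

lemma characterDual_exactAt {n : ℤ} (hF : F.ExactAt (-n)) : F.characterDual.ExactAt n :=
  exactAt_of_ker_d_eq_range_d _ (i := n - 1) (k := n + 1) (by omega) rfl
    (ker_dualMapOp_eq_range_dualMapOp (F.ker_d_eq_range_d hF (by omega) (by omega)))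

end CochainComplex

section Main

universe u v

variable {S : Type u} [Ring S] [Small.{v} S]

theorem isFlatMod_ker_of_injective_ker_dualMapOp {F : ℕ → Type v} [∀ n, AddCommGroup (F n)]
    [∀ n, Module S (F n)] {d : ∀ n, F n →ₗ[S] F (n + 1)} (hinj : Function.Injective (d 0))
    (hker : ∀ n, LinearMap.ker (d (n + 1)) = LinearMap.range (d n))
    (hdual0 : Module.Injective Sᵐᵒᵖ (CharacterModule (F 0)))
    (hdualker : ∀ n, Module.Injective Sᵐᵒᵖ (LinearMap.ker (dualMapOp (d n)))) :
    ∀ n, IsFlatMod.{w} S (LinearMap.ker (d n))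
  | 0 =>
    have : Subsingleton (LinearMap.ker (d 0)) :=
      ⟨fun a b => Subtype.ext (hinj (a.2.trans b.2.symm))⟩
    isFlatMod_of_injective_characterModule (Module.Injective.of_subsingleton _ _)
  | 1 =>
    isFlatMod_of_injective_characterModule (hdual0.of_linearEquiv (dualEquivOp
      ((LinearEquiv.ofInjective (d 0) hinj).trans (LinearEquiv.ofEq _ _ (hker 0).symm)).symm))
  | n + 2 =>
    isFlatMod_of_injective_characterModule
      (injective_characterModule_ker (hker n) (hker (n + 1)) (hdualker n))

theorem CochainComplex.isFlatMod_cycles_of_homotopy_characterDual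
    (F : CochainComplex (ModuleCat.{v} S) ℤ) (hflat : ∀ n, IsFlatMod.{u} S (F.X n))
    (hexact : ∀ n, F.ExactAt n) (ht : Homotopy (𝟙 F.characterDual) 0) (n : ℤ) :
    IsFlatMod.{w} S (F.cycles n) := by
  obtain ⟨k, rfl⟩ : ∃ k, n = -k := ⟨-n, by omega⟩
  have hdual : Module.Injective Sᵐᵒᵖ
      (LinearMap.ker (dualMapOp (F.d (-(k + 1 + 1)) (-(k + 1))).hom)) :=
    ht.injective_ker_d (i := k) rfl rfl
      (injective_characterModule_of_isFlatMod (hflat (-k)))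
  have hcycles : Module.Injective Sᵐᵒᵖ
      (CharacterModule (LinearMap.ker (F.d (-k) (-(k - 1))).hom)) :=
    injective_characterModule_ker
      (F.ker_d_eq_range_d (hexact _) (by omega) (by omega))
      (F.ker_d_eq_range_d (hexact _) (by omega) (by omega)) hdual
  have e : (F.cycles (-k) : Type v) ≃ₗ[S] LinearMap.ker (F.d (-k) (-(k - 1))).hom :=
    ((F.cyclesIsoSc' (-(k + 1)) (-k) (-(k - 1)) (by rw [CochainComplex.prev]; omega)
      (by rw [CochainComplex.next]; omega)) ≪≫
      (F.sc' _ _ _).moduleCatCyclesIso).toLinearEquiv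
  exact isFlatMod_of_injective_characterModule (hcycles.of_linearEquiv (dualEquivOp e))

end Main

/-- Part 1: if a bounded below acyclic complex `F⁰ → F¹ → ⋯` of flat left `S`-modules is such
that its termwise character dual — a bounded above acyclic complex of injective right
`S`-modules — has all its cocycle modules injective, then all the cocycle modules of `F•` are
flat.  Part 2 (consequently): if every bounded above acyclic complex of injective right
`S`-modules is contractible, then every bounded below acyclic complex of flat left `S`-modules
is pure acyclic. -/
theorem flat_cocycles_of_dual_cocycles_injective_and_purity (S : Type u) [Ring S] :
    (∀ (F : ℕ → Type u) (_ : ∀ n, AddCommGroup (F n)) (_ : ∀ n, Module S (F n))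
      (d : ∀ n, F n →ₗ[S] F (n + 1)),
      (∀ n, IsFlatMod.{u} S (F n)) →
      (∀ n, (d (n + 1)).comp (d n) = 0) →
      Function.Injective (d 0) →
      (∀ n, LinearMap.ker (d (n + 1)) = LinearMap.range (d n)) →
      (∀ n, Module.Injective Sᵐᵒᵖ (CharacterModule (F n))) →
      Module.Injective Sᵐᵒᵖ (CharacterModule (F 0)) →
      (∀ n, Module.Injective Sᵐᵒᵖ (LinearMap.ker (dualMapOp (d n)))) →
      (∀ n, IsFlatMod.{u} S (LinearMap.ker (d n))))
    ∧
    ((∀ J : CochainComplex (ModuleCat.{u} Sᵐᵒᵖ) ℤ,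
        (∃ N : ℤ, ∀ n : ℤ, N ≤ n → IsZero (J.X n)) →
        (∀ n : ℤ, Module.Injective Sᵐᵒᵖ (J.X n)) →
        (∀ n : ℤ, J.ExactAt n) →
        Nonempty (Homotopy (𝟙 J) 0)) →
      ∀ F : CochainComplex (ModuleCat.{u} S) ℤ,
        (∃ N : ℤ, ∀ n : ℤ, n ≤ N → IsZero (F.X n)) →
        (∀ n : ℤ, IsFlatMod.{u} S (F.X n)) →
        (∀ n : ℤ, F.ExactAt n) →
        (∀ n : ℤ, IsFlatMod.{u} S (F.cycles n))) := by
  refine ⟨fun _ _ _ _ _ _ hinj hker _ hdual0 hdualker =>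
    isFlatMod_ker_of_injective_ker_dualMapOp hinj hker hdual0 hdualker, ?_⟩
  intro hcontr F ⟨N, hN⟩ hflat hexact
  obtain ⟨ht⟩ := hcontr F.characterDual
    ⟨-N, fun n hn => F.isZero_characterDual_X (hN _ (by omega))⟩
    (fun n => injective_characterModule_of_isFlatMod (hflat (-n)))
    (fun n => F.characterDual_exactAt (hexact (-n)))
  exact F.isFlatMod_cycles_of_homotopy_characterDual hflat hexact ht
end

section
/- Let R = k[x_α : α ∈ A] be the polynomial ring in an infinite set of variables over a field k, and let k be the R-module on which all variables act by zero. Then for any flat R-module P and all integers n ≥ 0, Ext^n_R(k, P) = 0. -/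
/-!
Any sequence of distinct variables `x_{α₁}, …, x_{αₘ}` is regular on `R`, hence on every flat
`R`-module `P`, and each `x_{αᵢ}` annihilates `k`. Dimension shifting along
`0 → Q → Q → Q/xQ → 0` for an element `x` that is regular on `Q` and kills `k` shows that
`Ext^i_R(k, P)` vanishes for `i < m` (this is the easy half of Rees' characterisation of depth).
As `A` is infinite, `m` can be taken arbitrarily large.
-/

open CategoryTheory Limits RingTheory.Sequence

universe w u

namespace MvPolynomial

variable {σ R : Type*} [CommRing R]

theorem isSMulRegular_X_quotient_span_X_image {s : Set σ} {i : σ} (hi : i ∉ s) :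
    IsSMulRegular (MvPolynomial σ R ⧸ Ideal.span (X (R := R) '' s)) (X i : MvPolynomial σ R) := by
  refine IsSMulRegular.of_right_eq_zero_of_smul fun a ha => ?_
  obtain ⟨f, rfl⟩ := Submodule.Quotient.mk_surjective _ a
  rw [← Submodule.Quotient.mk_smul, Submodule.Quotient.mk_eq_zero, smul_eq_mul,
    mem_ideal_span_X_image] at ha
  rw [Submodule.Quotient.mk_eq_zero, mem_ideal_span_X_image]
  intro m hm
  obtain ⟨j, hj, hmj⟩ := ha _ (by rwa [mem_support_iff, coeff_X_mul, ← mem_support_iff])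
  have hji : j ≠ i := fun h => hi (h ▸ hj)
  exact ⟨j, hj, by simpa [Finsupp.single_apply, hji.symm] using hmj⟩

theorem isWeaklyRegular_map_X {l : List σ} (hl : l.Nodup) :
    IsWeaklyRegular (MvPolynomial σ R) (l.map (X (R := R))) := by
  refine ⟨fun i hi => ?_⟩
  have hspan : (Ideal.ofList ((l.map (X (R := R))).take i) • ⊤ : Submodule (MvPolynomial σ R) _) =
      Ideal.span (X (R := R) '' {a | a ∈ l.take i}) := by
    rw [Ideal.smul_eq_mul, Ideal.mul_top, ← List.map_take, Ideal.ofList]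
    congr 1
    ext
    simp [-List.map_take]
  rw [hspan, List.getElem_map]
  refine isSMulRegular_X_quotient_span_X_image fun h => List.disjoint_take_drop hl le_rfl h ?_
  exact List.mem_iff_getElem.2 ⟨0, by simpa using hi, by simp⟩

end MvPolynomial

theorem RingTheory.Sequence.IsWeaklyRegular.of_flat_module {R : Type*} [CommRing R] (M : Type*)
    [AddCommGroup M] [Module R M] [Module.Flat R M] {rs : List R} (h : IsWeaklyRegular R rs) :
    IsWeaklyRegular M rs :=
  ((TensorProduct.lid R M).isWeaklyRegular_congr rs).mp h.isWeaklyRegular_rTensor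

theorem ModuleCat.subsingleton_ext_of_isWeaklyRegular {R : Type u} [CommRing R] [Small.{w} R]
    {N M : ModuleCat.{w} R} {rs : List R} (hrs : ∀ r ∈ rs, r ∈ Module.annihilator R N)
    (reg : IsWeaklyRegular M rs) {i : ℕ} (hi : i < rs.length) :
    Subsingleton (Abelian.Ext N M i) := by
  induction rs generalizing M i with
  | nil => simp at hi
  | cons a rs ih =>
    rw [isWeaklyRegular_cons_iff] at reg
    have ha := hrs a List.mem_cons_self
    cases i with
    | zero =>
      have := reg.1.linearMap_subsingleton_of_mem_annihilator ha
      exact (Abelian.Ext.addEquiv₀.trans ModuleCat.homAddEquiv).subsingleton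
    | succ i =>
      have hquot : Subsingleton (Abelian.Ext N (ModuleCat.of R (QuotSMulTop a M)) i) :=
        ih (fun r hr => hrs r (List.mem_cons_of_mem a hr)) reg.2 (by simpa using hi)
      -- the long exact sequence makes `a • -` injective on `Ext^{i+1}(N, M)`, but `a` kills `N`
      let smul := AddCommGrpCat.ofHom
        ((Abelian.Ext.mk₀ (M.smulShortComplex a).f).postcomp N (add_zero (i + 1)))
      have : Mono smul :=
        (Abelian.Ext.covariant_sequence_exact₁' N reg.1.smulShortComplex_shortExact i (i + 1)
          rfl).mono_g ((AddCommGrpCat.isZero_of_iff_subsingleton.mpr hquot).eq_zero_of_src _)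
      have hsmul : smul = 0 := Abelian.Ext.postcomp_smul_id_eq_zero_of_mem_annihilator ha (i + 1)
      exact AddCommGrpCat.subsingleton_of_isZero (IsZero.of_mono_eq_zero smul hsmul)

/- The `Ext` of the statement is defined by deriving `Hom(-, Y)` along projective resolutions;
the long exact sequences used above live on `Abelian.Ext`, defined in the derived category. -/
section ExtComparison

variable {R : Type*} [Ring R] {C : Type*} [Category C] [Abelian C] [Linear R C]
  [HasExt.{w} C] {X Y : C}

theorem CategoryTheory.ProjectiveResolution.exactAt_linearYonedaObj_of_subsingleton_ext
    (res : ProjectiveResolution X) {n : ℕ} [Subsingleton (Abelian.Ext X Y n)] :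
    (res.complex.linearYonedaObj R Y).ExactAt n := by
  cases n with
  | zero =>
    rw [HomologicalComplex.exactAt_iff' _ 0 0 1 (by simp) (by simp),
      ShortComplex.moduleCat_exact_iff]
    intro φ (hφ : res.complex.d 1 0 ≫ φ = 0)
    obtain ⟨g, hg⟩ := CokernelCofork.IsColimit.desc' res.exact₀.gIsCokernel φ hφ
    have : Subsingleton (X ⟶ Y) := Abelian.Ext.homEquiv₀.symm.subsingleton
    have hg0 : g = 0 := Subsingleton.elim (α := X ⟶ Y) g 0
    exact ⟨0, by rw [map_zero, ← hg, hg0, comp_zero]; rfl⟩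
  | succ p =>
    rw [HomologicalComplex.exactAt_iff' _ p (p + 1) (p + 2) (by simp) (by simp),
      ShortComplex.moduleCat_exact_iff]
    intro φ (hφ : res.complex.d (p + 2) (p + 1) ≫ φ = 0)
    exact (res.extMk_eq_zero_iff φ (p + 2) rfl hφ p rfl).1 (Subsingleton.elim _ _)

theorem subsingleton_ext_of_subsingleton_abelian_ext [EnoughProjectives C] {n : ℕ}
    [Subsingleton (Abelian.Ext X Y n)] :
    Subsingleton (((Ext R C n).obj (Opposite.op X)).obj Y) :=
  let res : ProjectiveResolution X := (HasProjectiveResolution.out (Z := X)).some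
  ModuleCat.isZero_iff_subsingleton.1
    (res.exactAt_linearYonedaObj_of_subsingleton_ext.isZero_homology.of_iso (res.isoExt n Y))

end ExtComparison

/-- Dual Rickard theorem: over the polynomial ring `R = k[x_α : α ∈ A]` in an infinite set of
variables over a field `k`, with `k` the `R`-module on which every variable acts by zero,
one has `Ext^n_R(k, P) = 0` for every flat `R`-module `P` and all `n ≥ 0`. -/
theorem ext_trivial_flat_vanishes (k : Type u) [Field k] (A : Type u) [Infinite A]
    (P : Type u) [AddCommGroup P] [Module (MvPolynomial A k) P]
    (hP : Module.Flat (MvPolynomial A k) P) (n : ℕ) :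
    letI : Module (MvPolynomial A k) k :=
      Module.compHom k (MvPolynomial.eval (fun _ : A => (0 : k)))
    Subsingleton
      ((((Ext (MvPolynomial A k) (ModuleCat.{u} (MvPolynomial A k)) n).obj
        (Opposite.op (ModuleCat.of (MvPolynomial A k) k))).obj
        (ModuleCat.of (MvPolynomial A k) P))) := by
  let : Module (MvPolynomial A k) k :=
    Module.compHom k (MvPolynomial.eval (fun _ : A => (0 : k)))
  let vars : List A := List.ofFn fun i : Fin (n + 1) => Infinite.natEmbedding A i
  have hvars : vars.Nodup :=
    List.nodup_ofFn.2 ((Infinite.natEmbedding A).injective.comp Fin.val_injective)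
  let xs : List (MvPolynomial A k) := vars.map MvPolynomial.X
  have hann : ∀ r ∈ xs, r ∈ Module.annihilator (MvPolynomial A k) k := by
    intro r hr
    obtain ⟨a, -, rfl⟩ := List.mem_map.1 hr
    refine Module.mem_annihilator.2 fun c => ?_
    change MvPolynomial.eval (fun _ => (0 : k)) (MvPolynomial.X a) • c = 0
    rw [MvPolynomial.eval_X, zero_smul]
  have hreg : IsWeaklyRegular P xs :=
    have := hP
    (MvPolynomial.isWeaklyRegular_map_X hvars).of_flat_module P
  have : Subsingleton (Abelian.Ext (ModuleCat.of (MvPolynomial A k) k) (ModuleCat.of _ P) n) :=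
    ModuleCat.subsingleton_ext_of_isWeaklyRegular hann hreg (by simp [xs, vars])
  exact subsingleton_ext_of_subsingleton_abelian_ext
end

section
/- Let W be a k-vector space and Sym(W) the symmetric coalgebra. The complex 0 → k → Sym(W) → Sym(W) ⊗ W → Sym(W) ⊗ Λ²(W) → ⋯ → Sym(W) ⊗ Λⁿ(W) → ⋯, with differential given by the composition of the map induced by the comultiplication Sym(W) → Sym(W) ⊗ W with the map induced by the exterior multiplication W ⊗ Λⁿ(W) → Λⁿ⁺¹(W), is exact. -/
/-!
Extend the differential to the space spanned by all pairs `(μ, s)` of a monomial and a finite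
subset of `ι`. For `(μ, s) ≠ (0, ∅)` let `α` be the least index occurring in `μ` or `s`, and set
`h(μ, s) = (μ + α, s \ {α})` if `α ∈ s` and `h(μ, s) = 0` otherwise. Each term of `d(μ, s)`
moves one index from `μ` to `s`, which keeps the set of occurring indices, so the same `α` is
used by `h` on every term. If `α ∈ s`, the terms of `d h(μ, s)` other than `(μ, s)` cancel those
of `h d(μ, s)`: both move `α` and some `β > α`, in opposite orders, hence with opposite signs.
If `α ∉ s`, then `h(μ, s) = 0` and only the term of `d(μ, s)` moving `α` survives `h`, giving
back `(μ, s)`. So `d h + h d + π = 1`, with `π` the projection onto `(0, ∅)`, and `h` lowers the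
exterior degree by one; this contracting homotopy works in every characteristic.
-/

universe u

section SymKoszul

variable (k : Type u) [Field k] (ι : Type u) [LinearOrder ι]

/-- The degree-`n` term `Sym(W) ⊗ Λⁿ(W)` of the dual Koszul complex of the symmetric
coalgebra `Sym(W)` of a vector space `W` with basis indexed by `ι`, presented in the basis
consisting of pairs (divided-power monomial, `n`-element subset of `ι`).  (Here `Sym(W)` is
the symmetric coalgebra, i.e. the subcoalgebra of symmetric tensors of the tensor coalgebra,
with its basis of divided-power monomials `ι →₀ ℕ`, and `Λⁿ(W)` has its basis of `n`-element
subsets of `ι`.) -/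
def SymKos (n : ℕ) : Type u := ((ι →₀ ℕ) × {s : Finset ι // s.card = n}) →₀ k

noncomputable instance (n : ℕ) : AddCommGroup (SymKos k ι n) := Finsupp.instAddCommGroup

noncomputable instance (n : ℕ) : Module k (SymKos k ι n) := Finsupp.module _ _

/-- The differential `Sym(W) ⊗ Λⁿ(W) → Sym(W) ⊗ Λⁿ⁺¹(W)`, the composition of the map induced
by the comultiplication `Sym(W) → Sym(W) ⊗ W` with the map induced by the exterior
multiplication `W ⊗ Λⁿ(W) → Λⁿ⁺¹(W)`; on the divided-power basis it sends `(μ, s)` to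
`∑_{α ∈ supp μ, α ∉ s} ± (μ - δ_α, s ∪ {α})`. -/
noncomputable def symKosDiff (n : ℕ) : SymKos k ι n →ₗ[k] SymKos k ι (n + 1) :=
  Finsupp.lsum k fun p => LinearMap.toSpanSingleton k (SymKos k ι (n + 1))
    (∑ α ∈ (p.1.support \ p.2.1).attach,
      ((-1 : k) ^ ((p.2.1.filter (fun β => β < α.1)).card)) •
        Finsupp.single
          (p.1 - Finsupp.single α.1 1,
            ⟨insert α.1 p.2.1, by
              rw [Finset.card_insert_of_notMem (Finset.mem_sdiff.mp α.2).2, p.2.2]⟩)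
          (1 : k))

/-- The coaugmentation `k → Sym(W)` (the inclusion of the degree-zero component),
composed with the identification `Sym(W) = Sym(W) ⊗ Λ⁰(W)`. -/
noncomputable def symKosUnit : k →ₗ[k] SymKos k ι 0 :=
  LinearMap.toSpanSingleton k (SymKos k ι 0)
    (Finsupp.single (0, ⟨(∅ : Finset ι), rfl⟩) (1 : k))

end SymKoszul


open Finset

theorem Finset.sum_sum_erase_eq_zero_of_antisymm {α M : Type*} [DecidableEq α] [AddCommGroup M]
    (s : Finset α) (f : α → α → M) (hf : ∀ a ∈ s, ∀ b ∈ s, a ≠ b → f a b = -f b a) :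
    ∑ a ∈ s, ∑ b ∈ s.erase a, f a b = 0 := by
  rw [sum_sigma']
  refine sum_involution (fun x _ => ⟨x.2, x.1⟩) ?_ ?_ ?_ fun _ _ => rfl
  · rintro ⟨a, b⟩ hab
    obtain ⟨ha, hba, hb⟩ : a ∈ s ∧ b ≠ a ∧ b ∈ s := by simpa using hab
    rw [hf a ha b hb hba.symm, neg_add_cancel]
  · rintro ⟨a, b⟩ hab _ hswap
    obtain ⟨-, hba, -⟩ : a ∈ s ∧ b ≠ a ∧ b ∈ s := by simpa using hab
    exact hba (Sigma.mk.inj_iff.mp hswap).1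
  · rintro ⟨a, b⟩ hab
    obtain ⟨ha, hba, hb⟩ : a ∈ s ∧ b ≠ a ∧ b ∈ s := by simpa using hab
    simpa using ⟨hb, hba.symm, ha⟩

namespace Finsupp

variable {ι : Type*}

theorem single_one_le_of_mem_support {μ : ι →₀ ℕ} {α : ι} (hα : α ∈ μ.support) :
    single α 1 ≤ μ :=
  single_le_iff.mpr (Nat.one_le_iff_ne_zero.mpr (mem_support_iff.mp hα))

theorem support_add_single_one [DecidableEq ι] (μ : ι →₀ ℕ) (α : ι) :
    (μ + single α 1).support = insert α μ.support := by
  ext β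
  rcases eq_or_ne β α with rfl | hβ
  · simp
  · simp [single_eq_of_ne hβ, hβ]

variable [DecidableEq ι]

theorem support_tsub_single_one_union_insert {μ : ι →₀ ℕ} {s : Finset ι} {α : ι}
    (hα : α ∈ μ.support) :
    (μ - single α 1).support ∪ insert α s = μ.support ∪ s := by
  ext β
  rcases eq_or_ne β α with rfl | hβ
  · simp [hα]
  · simp [hβ]

theorem support_tsub_single_one_sdiff_insert {μ : ι →₀ ℕ} {s : Finset ι} {α : ι} :
    (μ - single α 1).support \ insert α s = (μ.support \ s).erase α := by
  ext β
  rcases eq_or_ne β α with rfl | hβ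
  · simp
  · simp [hβ]

end Finsupp

namespace SymKos

open Finsupp (single)

variable {k ι : Type*} [CommRing k] [LinearOrder ι]

abbrev Total (k ι : Type*) [Zero k] : Type _ := ((ι →₀ ℕ) × Finset ι) →₀ k

noncomputable def vec (k : Type*) [Zero k] [One k] (μ : ι →₀ ℕ) (s : Finset ι) : Total k ι :=
  single (μ, s) 1

/-- `e_α ∧ e_s = wedgeSign k s α • e_{s ∪ {α}}` for `α ∉ s`, where `e_s` is the wedge product of
the `e_β`, `β ∈ s`, in increasing order. -/
def wedgeSign (k : Type*) [CommRing k] (s : Finset ι) (α : ι) : k := (-1) ^ #{β ∈ s | β < α}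

theorem wedgeSign_of_forall_not_lt {s : Finset ι} {α : ι} (h : ∀ β ∈ s, ¬β < α) :
    wedgeSign k s α = 1 := by
  rw [wedgeSign, filter_false_of_mem h, card_empty, pow_zero]

theorem wedgeSign_insert {s : Finset ι} {γ : ι} (hγ : γ ∉ s) (α : ι) :
    wedgeSign k (insert γ s) α = (if γ < α then -1 else 1) * wedgeSign k s α := by
  rw [wedgeSign, wedgeSign, filter_insert]
  split_ifs
  · rw [card_insert_of_notMem (by simp [hγ]), pow_succ, mul_comm]
  · rw [one_mul]

theorem wedgeSign_erase {s : Finset ι} {γ : ι} (hγ : γ ∈ s) (α : ι) :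
    wedgeSign k s α = (if γ < α then -1 else 1) * wedgeSign k (s.erase γ) α := by
  conv_lhs => rw [← insert_erase hγ]
  exact wedgeSign_insert (notMem_erase _ _) α

theorem wedgeSign_mul_wedgeSign_insert_comm {s : Finset ι} {α β : ι} (hα : α ∉ s) (hβ : β ∉ s)
    (hαβ : α ≠ β) :
    wedgeSign k s α * wedgeSign k (insert α s) β =
      -(wedgeSign k s β * wedgeSign k (insert β s) α) := by
  rw [wedgeSign_insert hα, wedgeSign_insert hβ]
  rcases hαβ.lt_or_gt with h | h
  · rw [if_pos h, if_neg h.asymm]; ring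
  · rw [if_neg h.asymm, if_pos h]; ring

noncomputable def diffVec (k : Type*) [CommRing k] (μ : ι →₀ ℕ) (s : Finset ι) : Total k ι :=
  ∑ α ∈ μ.support \ s, wedgeSign k s α • vec k (μ - single α 1) (insert α s)

noncomputable def diff (k ι : Type*) [CommRing k] [LinearOrder ι] : Total k ι →ₗ[k] Total k ι :=
  Finsupp.linearCombination k fun p => diffVec k p.1 p.2

@[simp]
theorem diff_vec (μ : ι →₀ ℕ) (s : Finset ι) : diff k ι (vec k μ s) = diffVec k μ s := by
  rw [diff, vec, Finsupp.linearCombination_single, one_smul]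

theorem diff_diffVec (μ : ι →₀ ℕ) (s : Finset ι) : diff k ι (diffVec k μ s) = 0 := by
  have hterm : ∀ α ∈ μ.support \ s, wedgeSign k s α • diffVec k (μ - single α 1) (insert α s) =
      ∑ β ∈ (μ.support \ s).erase α, (wedgeSign k s α * wedgeSign k (insert α s) β) •
        vec k (μ - single α 1 - single β 1) (insert β (insert α s)) := by
    intro α _
    rw [diffVec, Finsupp.support_tsub_single_one_sdiff_insert, smul_sum]
    simp only [smul_smul]
  rw [diffVec, map_sum]
  simp only [map_smul, diff_vec]
  rw [sum_congr rfl hterm]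
  refine sum_sum_erase_eq_zero_of_antisymm _ _ fun α hα β hβ hαβ => ?_
  rw [mem_sdiff] at hα hβ
  rw [wedgeSign_mul_wedgeSign_insert_comm hα.2 hβ.2 hαβ, neg_smul, tsub_tsub, tsub_tsub,
    add_comm, insert_comm]

theorem diff_diff (x : Total k ι) : diff k ι (diff k ι x) = 0 := by
  suffices h : diff k ι ∘ₗ diff k ι = 0 from LinearMap.congr_fun h x
  refine Finsupp.lhom_ext' fun ⟨μ, s⟩ => LinearMap.ext_ring ?_
  change diff k ι (diff k ι (vec k μ s)) = 0
  rw [diff_vec, diff_diffVec]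

noncomputable def homotopyVec (k : Type*) [Zero k] [One k] (μ : ι →₀ ℕ) (s : Finset ι) :
    Total k ι :=
  if h : (μ.support ∪ s).Nonempty then
    if (μ.support ∪ s).min' h ∈ s then
      vec k (μ + single ((μ.support ∪ s).min' h) 1) (s.erase ((μ.support ∪ s).min' h))
    else 0
  else 0

noncomputable def homotopy (k ι : Type*) [CommRing k] [LinearOrder ι] :
    Total k ι →ₗ[k] Total k ι :=
  Finsupp.linearCombination k fun p => homotopyVec k p.1 p.2

@[simp]
theorem homotopy_vec (μ : ι →₀ ℕ) (s : Finset ι) :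
    homotopy k ι (vec k μ s) = homotopyVec k μ s := by
  rw [homotopy, vec, Finsupp.linearCombination_single, one_smul]

theorem homotopyVec_of_isLeast {μ : ι →₀ ℕ} {s : Finset ι} {α : ι}
    (hα : IsLeast ↑(μ.support ∪ s) α) :
    homotopyVec k μ s = if α ∈ s then vec k (μ + single α 1) (s.erase α) else 0 := by
  have hne : (μ.support ∪ s).Nonempty := ⟨α, hα.1⟩
  rw [homotopyVec, dif_pos hne, (isLeast_min' _ hne).unique hα]

noncomputable def unitProj (k ι : Type*) [CommRing k] [LinearOrder ι] :
    Total k ι →ₗ[k] Total k ι :=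
  (LinearMap.toSpanSingleton k _ (vec k 0 ∅)).comp (Finsupp.lapply (0, ∅))

theorem unitProj_apply (x : Total k ι) : unitProj k ι x = x (0, ∅) • vec k 0 ∅ := rfl

theorem diff_homotopyVec_add_homotopy_diffVec_of_isLeast_mem {μ : ι →₀ ℕ} {s : Finset ι}
    {α : ι} (hα : IsLeast ↑(μ.support ∪ s) α) (hαs : α ∈ s) :
    diff k ι (homotopyVec k μ s) + homotopy k ι (diffVec k μ s) = vec k μ s := by
  set A := μ.support \ s
  have hαA : α ∉ A := fun h => (mem_sdiff.mp h).2 hαs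
  have hsupp : (μ + single α 1).support \ s.erase α = insert α A := by
    ext β
    rcases eq_or_ne β α with rfl | hβ
    · simp [A, Finsupp.support_add_single_one, hαs]
    · simp [A, Finsupp.support_add_single_one, hβ]
  have hdh : diff k ι (homotopyVec k μ s) = vec k μ s + ∑ β ∈ A,
      wedgeSign k (s.erase α) β • vec k (μ + single α 1 - single β 1) (insert β (s.erase α)) := by
    rw [homotopyVec_of_isLeast hα, if_pos hαs, diff_vec, diffVec, hsupp, sum_insert hαA,
      add_tsub_cancel_right, insert_erase hαs, wedgeSign_of_forall_not_lt, one_smul]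
    exact fun β hβ => not_lt.mpr (hα.2 (mem_union_right _ (mem_of_mem_erase hβ)))
  have hhd : homotopy k ι (diffVec k μ s) = -∑ β ∈ A,
      wedgeSign k (s.erase α) β • vec k (μ + single α 1 - single β 1) (insert β (s.erase α)) := by
    rw [diffVec, map_sum, ← sum_neg_distrib]
    refine sum_congr rfl fun β hβ => ?_
    obtain ⟨hβμ, hβs⟩ := mem_sdiff.mp hβ
    have hαβ : α < β := (hα.2 (mem_union_left _ hβμ)).lt_of_ne (ne_of_mem_of_not_mem hαs hβs)
    have hα' : IsLeast ↑((μ - single β 1).support ∪ insert β s) α := by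
      rwa [Finsupp.support_tsub_single_one_union_insert hβμ]
    rw [map_smul, homotopy_vec, homotopyVec_of_isLeast hα', if_pos (mem_insert_of_mem hαs),
      tsub_add_eq_add_tsub (Finsupp.single_one_le_of_mem_support hβμ),
      erase_insert_of_ne hαβ.ne', wedgeSign_erase hαs β, if_pos hαβ, neg_one_mul, neg_smul]
  rw [hdh, hhd, add_neg_cancel_right]

theorem diff_homotopyVec_add_homotopy_diffVec_of_isLeast_notMem {μ : ι →₀ ℕ} {s : Finset ι}
    {α : ι} (hα : IsLeast ↑(μ.support ∪ s) α) (hαs : α ∉ s) :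
    diff k ι (homotopyVec k μ s) + homotopy k ι (diffVec k μ s) = vec k μ s := by
  have hαμ : α ∈ μ.support := (mem_union.mp hα.1).resolve_right hαs
  have hα' : ∀ {β}, β ∈ μ.support → IsLeast ↑((μ - single β 1).support ∪ insert β s) α :=
    fun hβμ => by rwa [Finsupp.support_tsub_single_one_union_insert hβμ]
  rw [homotopyVec_of_isLeast hα, if_neg hαs, map_zero, zero_add, diffVec, map_sum,
    sum_eq_single_of_mem α (mem_sdiff.mpr ⟨hαμ, hαs⟩)]
  · rw [map_smul, homotopy_vec, homotopyVec_of_isLeast (hα' hαμ), if_pos (mem_insert_self _ _),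
      tsub_add_cancel_of_le (Finsupp.single_one_le_of_mem_support hαμ), erase_insert hαs,
      wedgeSign_of_forall_not_lt (fun β hβ => not_lt.mpr (hα.2 (mem_union_right _ hβ))),
      one_smul]
  · intro β hβ hβα
    rw [map_smul, homotopy_vec, homotopyVec_of_isLeast (hα' (mem_sdiff.mp hβ).1),
      if_neg (by simp [hαs, hβα.symm]), smul_zero]

theorem unitProj_vec_of_nonempty {μ : ι →₀ ℕ} {s : Finset ι} (h : (μ.support ∪ s).Nonempty) :
    unitProj k ι (vec k μ s) = 0 := by
  rw [unitProj_apply, vec, Finsupp.single_apply, if_neg, zero_smul]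
  rintro ⟨⟩
  simp at h

theorem diff_homotopy_add_homotopy_diff_add_unitProj (x : Total k ι) :
    diff k ι (homotopy k ι x) + homotopy k ι (diff k ι x) + unitProj k ι x = x := by
  suffices h : diff k ι ∘ₗ homotopy k ι + homotopy k ι ∘ₗ diff k ι + unitProj k ι = .id from
    LinearMap.congr_fun h x
  refine Finsupp.lhom_ext' fun ⟨μ, s⟩ => LinearMap.ext_ring ?_
  change diff k ι (homotopy k ι (vec k μ s)) + homotopy k ι (diff k ι (vec k μ s)) +
    unitProj k ι (vec k μ s) = vec k μ s
  rw [homotopy_vec, diff_vec]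
  rcases (μ.support ∪ s).eq_empty_or_nonempty with hU | hU
  · obtain ⟨rfl, rfl⟩ : μ = 0 ∧ s = ∅ := by simpa using hU
    simp [homotopyVec, diffVec, unitProj_apply, vec]
  · obtain ⟨α, hα⟩ : ∃ α, IsLeast (↑(μ.support ∪ s) : Set ι) α := ⟨_, isLeast_min' _ hU⟩
    rw [unitProj_vec_of_nonempty hU, add_zero]
    by_cases hαs : α ∈ s
    · exact diff_homotopyVec_add_homotopy_diffVec_of_isLeast_mem hα hαs
    · exact diff_homotopyVec_add_homotopy_diffVec_of_isLeast_notMem hα hαs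

section Field

variable {k ι : Type u} [Field k] [LinearOrder ι]

noncomputable def toTotal (k ι : Type u) [Field k] [LinearOrder ι] (n : ℕ) :
    SymKos k ι n →ₗ[k] Total k ι :=
  Finsupp.lmapDomain k k (Prod.map id Subtype.val)

theorem toTotal_injective (n : ℕ) : Function.Injective (toTotal k ι n) :=
  Finsupp.mapDomain_injective (Function.injective_id.prodMap Subtype.val_injective)

theorem toTotal_single_one {n : ℕ} (p : (ι →₀ ℕ) × {s : Finset ι // #s = n}) :
    toTotal k ι n (Finsupp.single p 1) = vec k p.1 p.2.1 :=
  Finsupp.mapDomain_single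

theorem toTotal_symKosDiff (n : ℕ) (x : SymKos k ι n) :
    toTotal k ι (n + 1) (symKosDiff k ι n x) = diff k ι (toTotal k ι n x) := by
  suffices h : toTotal k ι (n + 1) ∘ₗ symKosDiff k ι n = diff k ι ∘ₗ toTotal k ι n from
    LinearMap.congr_fun h x
  refine Finsupp.lhom_ext' fun p => LinearMap.ext_ring ?_
  change toTotal k ι (n + 1) (symKosDiff k ι n (Finsupp.single p 1)) =
    diff k ι (toTotal k ι n (Finsupp.single p 1))
  rw [toTotal_single_one, diff_vec, diffVec, symKosDiff]
  erw [Finsupp.lsum_single, LinearMap.toSpanSingleton_apply, one_smul, map_sum]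
  rw [← sum_attach (p.1.support \ p.2.1)]
  refine sum_congr rfl fun α _ => ?_
  erw [map_smul, toTotal_single_one]
  rfl

theorem toTotal_symKosUnit (c : k) : toTotal k ι 0 (symKosUnit k ι c) = c • vec k 0 ∅ := by
  erw [LinearMap.toSpanSingleton_apply, map_smul, toTotal_single_one]

theorem homotopyVec_mem_range_toTotal {n : ℕ} (μ : ι →₀ ℕ) {s : Finset ι} (hs : #s = n + 1) :
    homotopyVec k μ s ∈ LinearMap.range (toTotal k ι n) := by
  unfold homotopyVec
  split_ifs with hne hmem
  · set α := (μ.support ∪ s).min' hne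
    have hcard : #(s.erase α) = n := by rw [card_erase_of_mem hmem, hs, Nat.add_sub_cancel]
    exact ⟨Finsupp.single (μ + single α 1, ⟨s.erase α, hcard⟩) 1, toTotal_single_one _⟩
  all_goals exact zero_mem _

theorem homotopy_comp_toTotal (n : ℕ) :
    homotopy k ι ∘ₗ toTotal k ι n = Finsupp.linearCombination k
      fun p : (ι →₀ ℕ) × {s : Finset ι // #s = n} => homotopyVec k p.1 p.2.1 :=
  Finsupp.linearCombination_comp_lmapDomain _ _

theorem homotopy_toTotal_succ_mem_range {n : ℕ} (x : SymKos k ι (n + 1)) :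
    homotopy k ι (toTotal k ι (n + 1) x) ∈ LinearMap.range (toTotal k ι n) := by
  have hle : LinearMap.range (Finsupp.linearCombination k
      fun p : (ι →₀ ℕ) × {s : Finset ι // #s = n + 1} => homotopyVec k p.1 p.2.1) ≤
      LinearMap.range (toTotal k ι n) := by
    rw [Finsupp.range_linearCombination, Submodule.span_le]
    rintro _ ⟨p, rfl⟩
    exact homotopyVec_mem_range_toTotal p.1 p.2.2
  rw [← LinearMap.comp_apply, homotopy_comp_toTotal]
  exact hle (LinearMap.mem_range_self _ x)

theorem homotopy_toTotal_zero (x : SymKos k ι 0) : homotopy k ι (toTotal k ι 0 x) = 0 := by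
  have hvec : (fun p : (ι →₀ ℕ) × {s : Finset ι // #s = 0} => homotopyVec k p.1 p.2.1) = 0 := by
    ext1 ⟨μ, s, hs⟩
    obtain rfl := card_eq_zero.mp hs
    simp [homotopyVec]
  rw [← LinearMap.comp_apply, homotopy_comp_toTotal, hvec]
  exact Finsupp.linearCombination_zero_apply k x

theorem unitProj_toTotal_succ {n : ℕ} (x : SymKos k ι (n + 1)) :
    unitProj k ι (toTotal k ι (n + 1) x) = 0 := by
  suffices h : unitProj k ι ∘ₗ toTotal k ι (n + 1) = 0 from LinearMap.congr_fun h x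
  refine Finsupp.lhom_ext' fun ⟨μ, s, hs⟩ => LinearMap.ext_ring ?_
  change unitProj k ι (toTotal k ι (n + 1) (Finsupp.single (μ, ⟨s, hs⟩) 1)) = 0
  rw [toTotal_single_one, unitProj_vec_of_nonempty]
  have hne : s.Nonempty := card_pos.mp (by omega)
  exact hne.mono subset_union_right

theorem symKosUnit_injective : Function.Injective (symKosUnit k ι) := by
  intro a b h
  have h' := congrArg (toTotal k ι 0) h
  rw [toTotal_symKosUnit, toTotal_symKosUnit, vec, Finsupp.smul_single_one,
    Finsupp.smul_single_one] at h'
  exact Finsupp.single_injective _ h'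

theorem exact_symKosUnit_symKosDiff : Function.Exact (symKosUnit k ι) (symKosDiff k ι 0) := by
  refine LinearMap.exact_of_comp_of_mem_range ?_ fun y hy => ?_
  · refine LinearMap.ext fun c => toTotal_injective 1 ?_
    rw [LinearMap.comp_apply, toTotal_symKosDiff, toTotal_symKosUnit, map_smul, diff_vec,
      LinearMap.zero_apply, map_zero]
    simp [diffVec]
  · have hcycle : diff k ι (toTotal k ι 0 y) = 0 := by rw [← toTotal_symKosDiff, hy, map_zero]
    have hsplit := diff_homotopy_add_homotopy_diff_add_unitProj (toTotal k ι 0 y)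
    rw [homotopy_toTotal_zero, hcycle, map_zero, map_zero, zero_add, zero_add,
      unitProj_apply] at hsplit
    exact ⟨toTotal k ι 0 y (0, ∅), toTotal_injective 0 (by rw [toTotal_symKosUnit, hsplit])⟩

theorem exact_symKosDiff_succ (n : ℕ) :
    Function.Exact (symKosDiff k ι n) (symKosDiff k ι (n + 1)) := by
  refine LinearMap.exact_of_comp_of_mem_range ?_ fun y hy => ?_
  · refine LinearMap.ext fun z => toTotal_injective (n + 2) ?_
    rw [LinearMap.comp_apply, toTotal_symKosDiff, toTotal_symKosDiff, diff_diff,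
      LinearMap.zero_apply, map_zero]
  · have hcycle : diff k ι (toTotal k ι (n + 1) y) = 0 := by
      rw [← toTotal_symKosDiff, hy, map_zero]
    have hsplit := diff_homotopy_add_homotopy_diff_add_unitProj (toTotal k ι (n + 1) y)
    rw [hcycle, map_zero, add_zero, unitProj_toTotal_succ, add_zero] at hsplit
    obtain ⟨z, hz⟩ := homotopy_toTotal_succ_mem_range y
    exact ⟨z, toTotal_injective (n + 1) (by rw [toTotal_symKosDiff, hz, hsplit])⟩

end Field

end SymKos

theorem symmetric_coalgebra_dual_koszul_exact_general
    (k : Type u) [Field k]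
    (ι : Type u) [LinearOrder ι] :
    Function.Injective (symKosUnit k ι) ∧
    Function.Exact (symKosUnit k ι) (symKosDiff k ι 0) ∧
    (∀ n : ℕ, Function.Exact (symKosDiff k ι n) (symKosDiff k ι (n + 1))) :=
  ⟨SymKos.symKosUnit_injective, SymKos.exact_symKosUnit_symKosDiff, SymKos.exact_symKosDiff_succ⟩

/-- For any `k`-vector space `W` (with a basis indexed by `ι`), the dual Koszul complex
`0 → k → Sym(W) → Sym(W) ⊗ W → Sym(W) ⊗ Λ²(W) → ⋯` of the symmetric coalgebra `Sym(W)`,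
with differential induced by the comultiplication `Sym(W) → Sym(W) ⊗ W` followed by the
exterior multiplication `W ⊗ Λⁿ(W) → Λⁿ⁺¹(W)`, is exact. -/
theorem symmetric_coalgebra_dual_koszul_exact
    (k : Type u) [Field k] (W : Type u) [AddCommGroup W] [Module k W]
    (ι : Type u) [LinearOrder ι] (b : Module.Basis ι k W) :
    Function.Injective (symKosUnit k ι) ∧
    Function.Exact (symKosUnit k ι) (symKosDiff k ι 0) ∧
    (∀ n : ℕ, Function.Exact (symKosDiff k ι n) (symKosDiff k ι (n + 1))) :=
  symmetric_coalgebra_dual_koszul_exact_general k ι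
end

section
/- Let k be a field and S_uni the k-algebra generated by elements x₀, x₁, x₂, … subject only to the relations xₙ xₙ₊₁ = 0 for all n ≥ 0. Then: (i) if s ∈ S_uni satisfies s·x₀ = 0, then s = 0; and (ii) for n ≥ 0, if s ∈ S_uni satisfies s·xₙ₊₁ = 0, then s = t·xₙ for some t ∈ S_uni. -/
universe u

/-- The defining relations of the universal algebra `S_uni`: `xₙ xₙ₊₁ = 0` for all `n ≥ 0`. -/
def SuniRel (k : Type u) [Field k] : FreeAlgebra k ℕ → FreeAlgebra k ℕ → Prop :=
  fun a b => ∃ n : ℕ, a = FreeAlgebra.ι k n * FreeAlgebra.ι k (n + 1) ∧ b = 0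

/-- The `k`-algebra `S_uni` generated by elements `x₀, x₁, x₂, …` subject only to the
relations `xₙ xₙ₊₁ = 0` for all `n ≥ 0`. -/
abbrev Suni (k : Type u) [Field k] : Type u := RingQuot (SuniRel k)

/-- The generator `xₙ` of `S_uni`. -/
noncomputable def xgen (k : Type u) [Field k] (n : ℕ) : Suni k :=
  RingQuot.mkAlgHom k (SuniRel k) (FreeAlgebra.ι k n)

/-!
Words without a factor `n (n+1)` span `S_uni`, since every other word is `0`. Conversely
`S_uni` acts on the right of the free `k`-module on such words by appending letters, a word that
becomes inadmissible being sent to `0`; this respects `xₙ xₙ₊₁ = 0`. Acting on the empty word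
gives a normal form inverse to evaluation of words, so the words form a basis. On normal forms
right multiplication by `xₘ` appends `m`: this is injective for `m = 0`, and for `m = n + 1` it
kills exactly the words ending in `n`, so `s xₙ₊₁ = 0` forces every word of `s` to end in `xₙ`.
-/
open Finsupp Submodule MulOpposite

namespace Suni

def IsAdmissible (l : List ℕ) : Prop := l.IsChain fun a b => b ≠ a + 1

instance : DecidablePred IsAdmissible := fun l => inferInstanceAs (Decidable (l.IsChain _))

theorem isAdmissible_append_singleton_iff {l : List ℕ} {m : ℕ} :
    IsAdmissible (l ++ [m]) ↔ IsAdmissible l ∧ ∀ a ∈ l.getLast?, m ≠ a + 1 := by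
  simp [IsAdmissible, List.isChain_append]

theorem IsAdmissible.of_append_left {l l' : List ℕ} (h : IsAdmissible (l ++ l')) :
    IsAdmissible l :=
  List.IsChain.left_of_append h

theorem IsAdmissible.append_zero {l : List ℕ} (h : IsAdmissible l) : IsAdmissible (l ++ [0]) :=
  isAdmissible_append_singleton_iff.2 ⟨h, fun _ _ => by omega⟩

theorem IsAdmissible.append_succ {l : List ℕ} {n : ℕ} (h : IsAdmissible l)
    (hl : l.getLast? ≠ some n) : IsAdmissible (l ++ [n + 1]) :=
  isAdmissible_append_singleton_iff.2 ⟨h, fun a ha hn => hl (by rwa [Nat.succ_injective hn])⟩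

theorem not_isAdmissible_append_pair (l : List ℕ) (n : ℕ) :
    ¬ IsAdmissible (l ++ [n] ++ [n + 1]) := by
  rw [isAdmissible_append_singleton_iff]
  simp

variable (k : Type u) [Field k]

noncomputable def wordProd (l : List ℕ) : Suni k := (l.map (xgen k)).prod

theorem wordProd_append (l l' : List ℕ) :
    wordProd k (l ++ l') = wordProd k l * wordProd k l' := by
  simp [wordProd]

theorem wordProd_singleton (m : ℕ) : wordProd k [m] = xgen k m := by
  simp [wordProd]

theorem xgen_mul_xgen_succ (n : ℕ) : xgen k n * xgen k (n + 1) = 0 := by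
  simpa [xgen] using RingQuot.mkAlgHom_rel k (s := SuniRel k) ⟨n, rfl, rfl⟩

theorem wordProd_eq_zero_of_not_isAdmissible :
    ∀ {l : List ℕ}, ¬ IsAdmissible l → wordProd k l = 0
  | [], h => absurd List.isChain_nil h
  | [_], h => absurd (List.isChain_singleton _) h
  | a :: b :: l, h => by
    by_cases hb : b = a + 1
    · subst hb
      simp [wordProd, ← mul_assoc, xgen_mul_xgen_succ]
    · have : ¬ IsAdmissible (b :: l) := fun hl => h (List.IsChain.cons_cons hb hl)
      rw [show a :: b :: l = [a] ++ b :: l from rfl, wordProd_append,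
        wordProd_eq_zero_of_not_isAdmissible this, mul_zero]

theorem span_range_wordProd : span k (Set.range (wordProd k)) = ⊤ := by
  have hadj : Algebra.adjoin k (Set.range (xgen k)) = ⊤ := by
    rw [show Set.range (xgen k) = RingQuot.mkAlgHom k (SuniRel k) '' Set.range (FreeAlgebra.ι k)
      by rw [← Set.range_comp]; rfl, ← AlgHom.map_adjoin,
      FreeAlgebra.adjoin_range_ι, Algebra.map_top,
      (AlgHom.range_eq_top _).2 (RingQuot.mkAlgHom_surjective k _)]
  rw [← Algebra.top_toSubmodule, ← hadj, Algebra.adjoin_eq_span, ← FreeMonoid.mrange_lift,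
    MonoidHom.coe_mrange, ← FreeMonoid.ofList.surjective.range_comp]
  congr
  funext l
  simp [wordProd, FreeMonoid.lift_apply]

abbrev Word := {l : List ℕ // IsAdmissible l}

abbrev WordModule := Word →₀ k

noncomputable def appendLetter (m : ℕ) : WordModule k →ₗ[k] WordModule k :=
  linearCombination k fun w =>
    if h : IsAdmissible (w.1 ++ [m]) then single ⟨w.1 ++ [m], h⟩ 1 else 0

theorem appendLetter_single_one (m : ℕ) (w : Word) :
    appendLetter k m (single w 1) =
      if h : IsAdmissible (w.1 ++ [m]) then single ⟨w.1 ++ [m], h⟩ 1 else 0 := by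
  simp [appendLetter]

theorem appendLetter_apply_append (m : ℕ) (v : WordModule k) (w : Word)
    (h : IsAdmissible (w.1 ++ [m])) : appendLetter k m v ⟨w.1 ++ [m], h⟩ = v w := by
  induction v using Finsupp.induction_linear with
  | zero => simp
  | add v v' hv hv' => simp [hv, hv']
  | single u c =>
    rw [← smul_single_one, map_smul, appendLetter_single_one]
    split_ifs with hu
    · by_cases huw : u = w
      · subst huw; simp
      · have : (⟨u.1 ++ [m], hu⟩ : Word) ≠ ⟨w.1 ++ [m], h⟩ := fun e =>
          huw (Subtype.ext (List.append_left_injective [m] (congrArg Subtype.val e)))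
        simp [this, huw]
    · have huw : u ≠ w := by rintro rfl; exact hu h
      simp [huw]

theorem appendLetter_succ_comp (n : ℕ) : appendLetter k (n + 1) ∘ₗ appendLetter k n = 0 := by
  ext w : 2
  simp only [LinearMap.comp_apply, lsingle_apply, appendLetter_single_one, LinearMap.zero_apply]
  split_ifs
  · rw [appendLetter_single_one, dif_neg (not_isAdmissible_append_pair w.1 n)]
  · exact map_zero _

noncomputable def rightAction : Suni k →ₐ[k] (Module.End k (WordModule k))ᵐᵒᵖ :=
  RingQuot.liftAlgHom k ⟨FreeAlgebra.lift k fun n => op (appendLetter k n), by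
    rintro _ _ ⟨n, rfl, rfl⟩
    rw [map_mul, FreeAlgebra.lift_ι_apply, FreeAlgebra.lift_ι_apply, ← op_mul,
      Module.End.mul_eq_comp, appendLetter_succ_comp, op_zero, map_zero]⟩

theorem rightAction_xgen (n : ℕ) : rightAction k (xgen k n) = op (appendLetter k n) := by
  rw [xgen, rightAction, RingQuot.liftAlgHom_mkAlgHom_apply, FreeAlgebra.lift_ι_apply]

noncomputable def normalForm : Suni k →ₗ[k] WordModule k where
  toFun s := (rightAction k s).unop (single ⟨[], List.isChain_nil⟩ 1)
  map_add' _ _ := by simp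
  map_smul' _ _ := by simp

theorem normalForm_mul_xgen (s : Suni k) (m : ℕ) :
    normalForm k (s * xgen k m) = appendLetter k m (normalForm k s) := by
  simp [normalForm, rightAction_xgen]

theorem normalForm_wordProd (l : List ℕ) (hl : IsAdmissible l) :
    normalForm k (wordProd k l) = single ⟨l, hl⟩ 1 := by
  induction l using List.reverseRecOn with
  | nil => simp [normalForm, wordProd]
  | append_singleton l m ih =>
    rw [wordProd_append, wordProd_singleton, normalForm_mul_xgen,
      ih hl.of_append_left, appendLetter_single_one, dif_pos hl]

noncomputable def ofNormalForm : WordModule k →ₗ[k] Suni k :=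
  linearCombination k fun w => wordProd k w.1

theorem ofNormalForm_normalForm (s : Suni k) : ofNormalForm k (normalForm k s) = s := by
  suffices ofNormalForm k ∘ₗ normalForm k = LinearMap.id from LinearMap.congr_fun this s
  refine LinearMap.ext_on_range (span_range_wordProd k) fun l => ?_
  by_cases hl : IsAdmissible l
  · simp [normalForm_wordProd k l hl, ofNormalForm]
  · simp [wordProd_eq_zero_of_not_isAdmissible k hl]

theorem normalForm_apply_eq_zero {s : Suni k} {m : ℕ} (hs : s * xgen k m = 0) (w : Word)
    (h : IsAdmissible (w.1 ++ [m])) : normalForm k s w = 0 := by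
  rw [← appendLetter_apply_append k m _ w h, ← normalForm_mul_xgen, hs, map_zero,
    Finsupp.coe_zero, Pi.zero_apply]

theorem ofNormalForm_eq_mul_xgen {v : WordModule k} {n : ℕ}
    (hv : ∀ w ∈ v.support, w.1.getLast? = some n) :
    ofNormalForm k v = (v.sum fun w c => c • wordProd k w.1.dropLast) * xgen k n := by
  rw [ofNormalForm, linearCombination_apply, sum_mul]
  refine sum_congr fun w hw => ?_
  nth_rw 1 [smul_mul_assoc, ← List.dropLast_append_getLast? _ (hv w hw), wordProd_append,
    wordProd_singleton]

end Suni

open Suni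

/-- In `S_uni`: (i) any element `s` with `s·x₀ = 0` vanishes; (ii) for `n ≥ 0`, any element
`s` with `s·xₙ₊₁ = 0` has the form `s = t·xₙ` for some `t ∈ S_uni`. -/
theorem suni_annihilators (k : Type u) [Field k] :
    (∀ s : Suni k, s * xgen k 0 = 0 → s = 0) ∧
    (∀ n : ℕ, ∀ s : Suni k, s * xgen k (n + 1) = 0 → ∃ t : Suni k, s = t * xgen k n) := by
  refine ⟨fun s hs => ?_, fun n s hs => ?_⟩
  · have hnf : normalForm k s = 0 := by
      ext w
      exact normalForm_apply_eq_zero k hs w w.2.append_zero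
    rw [← ofNormalForm_normalForm k s, hnf, map_zero]
  · rw [← ofNormalForm_normalForm k s, ofNormalForm_eq_mul_xgen k fun w hw => ?_]
    · exact ⟨_, rfl⟩
    · by_contra hne
      exact mem_support_iff.1 hw (normalForm_apply_eq_zero k hs w (w.2.append_succ hne))
end

section
/- Let k be a field and S = S_uni the k-algebra generated by x₀, x₁, x₂, … with relations xₙ xₙ₊₁ = 0. The acyclic complex of free left S-modules 0 → S →(·x₀) S →(·x₁) S → ⋯ is not contractible: applying the functor k ⊗_S − (where k is the right S-module on which all xₙ act by zero) yields the complex 0 → k →0 k →0 k → ⋯ with zero differentials, which is not acyclic. -/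
universe u

lemma xgen_mul_succ (k : Type u) [Field k] (n : ℕ) :
    xgen k n * xgen k (n + 1) = 0 := by
  have hr : SuniRel k (FreeAlgebra.ι k n * FreeAlgebra.ι k (n + 1)) 0 := ⟨n, rfl, rfl⟩
  have h := RingQuot.mkAlgHom_rel k hr
  simpa [map_mul, map_zero, xgen] using h

/-- Right multiplication by `a` as a map of left modules. -/
def mulRightLin (S : Type u) [Ring S] (a : S) : S →ₗ[S] S where
  toFun s := s * a
  map_add' x y := add_mul x y a
  map_smul' r s := mul_assoc r s a

open CategoryTheory

/-- The bounded below complex `0 → S → S → S → ⋯` of free left `S_uni`-modules with one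
generator, with differentials given by right multiplication by `x₀, x₁, x₂, …`. -/
noncomputable def suniComplex (k : Type u) [Field k] :
    CochainComplex (ModuleCat.{u} (Suni k)) ℕ :=
  CochainComplex.of (fun _ => ModuleCat.of (Suni k) (Suni k))
    (fun n => ModuleCat.ofHom (mulRightLin (Suni k) (xgen k n)))
    (fun n => by
      have h : (mulRightLin (Suni k) (xgen k (n + 1))).comp
          (mulRightLin (Suni k) (xgen k n)) = 0 := by
        apply LinearMap.ext
        intro s
        show (s * xgen k n) * xgen k (n + 1) = 0
        rw [mul_assoc, xgen_mul_succ, mul_zero]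
      first
        | exact ModuleCat.hom_ext h
        | exact ModuleCat.hom_ext (by rw [ModuleCat.hom_comp, ModuleCat.hom_ofHom, ModuleCat.hom_ofHom, ModuleCat.hom_zero]; exact h))

/-!
If `h` contracts the complex, then in degree `0` it gives `h¹⁰(s x₀) = s`, so
`1 = h¹⁰(x₀) = x₀ · h¹⁰(1)` and `x₀` has a right inverse. This is impossible because the
augmentation `S_uni → k` killing all generators sends `x₀ · b` to `0`. (Composing with the
augmentation is the degree-`0` shadow of applying `k ⊗_S −`.)
-/

theorem Homotopy.cochainComplex_d_comp_hom_eq_id {V : Type*} [Category V] [Preadditive V]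
    {C : CochainComplex V ℕ} (h : Homotopy (𝟙 C) 0) : C.d 0 1 ≫ h.hom 1 0 = 𝟙 (C.X 0) := by
  have hcomm := h.comm 0
  rw [Homotopy.dNext_cochainComplex, Homotopy.prevD_zero_cochainComplex] at hcomm
  simpa using hcomm.symm

theorem exists_mul_eq_one_of_map_mul_eq_self {S : Type u} [Ring S] {a : S} (f : S →ₗ[S] S)
    (hf : ∀ s, f (s * a) = s) : ∃ b, a * b = 1 :=
  ⟨f 1, by rw [← smul_eq_mul, ← f.map_smul, smul_eq_mul, mul_one, ← one_mul a, hf]⟩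

namespace Suni

variable (k : Type u) [Field k]

noncomputable def augmentation : Suni k →ₐ[k] k :=
  RingQuot.liftAlgHom k ⟨FreeAlgebra.lift k fun _ => 0, by rintro _ _ ⟨n, rfl, rfl⟩; simp⟩

@[simp]
theorem augmentation_xgen (n : ℕ) : augmentation k (xgen k n) = 0 := by
  simp [augmentation, xgen, RingQuot.liftAlgHom_mkAlgHom_apply]

theorem xgen_mul_ne_one (n : ℕ) (b : Suni k) : xgen k n * b ≠ 1 := fun h => by
  simpa using congrArg (augmentation k) h

end Suni

theorem suniComplex_d_apply (k : Type u) [Field k] (n : ℕ) (s : Suni k) :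
    (suniComplex k).d n (n + 1) s = s * xgen k n := by
  simp only [suniComplex, CochainComplex.of_d]
  rfl

/-- The acyclic complex `0 → S →(·x₀) S →(·x₁) S → ⋯` of free left `S_uni`-modules is *not*
contractible. -/
theorem suni_complex_not_contractible (k : Type u) [Field k] :
    ¬ Nonempty (Homotopy (𝟙 (suniComplex k)) 0) := by
  rintro ⟨h⟩
  have hsplit : ∀ s : Suni k, (h.hom 1 0).hom (s * xgen k 0) = s := fun s => by
    rw [← suniComplex_d_apply]
    exact congr(($(Homotopy.cochainComplex_d_comp_hom_eq_id h)).hom s)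
  obtain ⟨b, hb⟩ := exists_mul_eq_one_of_map_mul_eq_self _ hsplit
  exact Suni.xgen_mul_ne_one k 0 b hb
end

section
/- Let R be a coherent commutative ring, Q a finitely generated projective R-module, and P a flat R-module. Then the R-module Hom_R(Q, P) is flat. More generally, over a coherent ring, any product of flat modules is flat, and hence Hom_R(Q, P) is flat for every projective R-module Q and flat R-module P. -/
universe u

/-! For a finitely presented module `N`, the canonical map `N ⊗ ∏ Mᵢ → ∏ (N ⊗ Mᵢ)` is bijective:
it is so for finite free `N`, both sides are right exact in `N`, and the five lemma applies to a
finite presentation of `N`. Over a coherent ring a finitely generated ideal `I` is finitely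
presented, so `I ⊗ ∏ Mᵢ → ∏ Mᵢ` is this isomorphism followed by the product of the injections
`I ⊗ Mᵢ → Mᵢ`; hence products of flat modules are flat. For projective `Q`, `Hom(Q, P)` is a retract
of `Hom(Q →₀ R, P) ≃ P^Q`. -/

open TensorProduct LinearMap

lemma Function.Exact.linearMap_piMap {R : Type*} [Semiring R] {ι : Type*} {A B C : ι → Type*}
    [∀ i, AddCommMonoid (A i)] [∀ i, Module R (A i)] [∀ i, AddCommMonoid (B i)]
    [∀ i, Module R (B i)] [∀ i, AddCommMonoid (C i)] [∀ i, Module R (C i)]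
    {f : ∀ i, A i →ₗ[R] B i} {g : ∀ i, B i →ₗ[R] C i} (h : ∀ i, Function.Exact (f i) (g i)) :
    Function.Exact (piMap f) (piMap g) := by
  intro y
  simp only [coe_piMap, funext_iff, Pi.map_apply, Pi.zero_apply, Set.mem_range]
  constructor
  · intro hy
    choose x hx using fun i ↦ (h i (y i)).mp (hy i)
    exact ⟨x, hx⟩
  · rintro ⟨x, hx⟩ i
    exact (h i (y i)).mpr ⟨x i, hx i⟩

namespace TensorProduct

section CommSemiring

variable {R : Type*} [CommSemiring R] {ι : Type*} {M : ι → Type*}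
  [∀ i, AddCommMonoid (M i)] [∀ i, Module R (M i)]
  {N N' : Type*} [AddCommMonoid N] [Module R N] [AddCommMonoid N'] [Module R N']

lemma piMap_rTensor_comp_piRightHom (f : N →ₗ[R] N') :
    (piMap fun i ↦ f.rTensor (M i)) ∘ₗ piRightHom R R N M =
      piRightHom R R N' M ∘ₗ f.rTensor (∀ i, M i) :=
  TensorProduct.ext' fun _ _ ↦ rfl

lemma finsuppScalarLeft_piRightHom_apply {κ : Type*} [DecidableEq κ]
    (z : (κ →₀ R) ⊗[R] (∀ i, M i)) (i : ι) (k : κ) :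
    finsuppScalarLeft R (M i) κ (piRightHom R R (κ →₀ R) M z i) k =
      finsuppScalarLeft R (∀ i, M i) κ z k i := by
  induction z using TensorProduct.induction_on with
  | zero => simp
  | tmul p f => simp
  | add a b ha hb => simp [ha, hb]

lemma piRightHom_finsupp_bijective (κ : Type*) [Finite κ] :
    Function.Bijective (piRightHom R R (κ →₀ R) M) := by
  classical
  constructor
  · refine fun z z' h ↦ (finsuppScalarLeft R (∀ i, M i) κ).injective ?_
    ext k i
    simp only [← finsuppScalarLeft_piRightHom_apply, h]
  · intro y
    let w : κ →₀ ∀ i, M i :=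
      Finsupp.equivFunOnFinite.symm fun k i ↦ finsuppScalarLeft R (M i) κ (y i) k
    refine ⟨(finsuppScalarLeft R (∀ i, M i) κ).symm w, funext fun i ↦ ?_⟩
    apply (finsuppScalarLeft R (M i) κ).injective
    ext k
    simp [finsuppScalarLeft_piRightHom_apply, w]

end CommSemiring

variable {R : Type*} [CommRing R] {ι : Type*} {M : ι → Type*}
  [∀ i, AddCommGroup (M i)] [∀ i, Module R (M i)]

lemma piRightHom_bijective_of_finitePresentation (N : Type*) [AddCommGroup N] [Module R N]
    [Module.FinitePresentation R N] : Function.Bijective (piRightHom R R N M) := by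
  obtain ⟨pres, _, _⟩ := Module.finitePresentation_iff_exists_presentation.{0, 0}.mp
    (inferInstance : Module.FinitePresentation R N)
  have hexact := pres.exact
  have hπ := pres.surjective_π
  exact LinearMap.bijective_of_surjective_of_bijective_of_right_exact
    _ _ _ _ _ _ _
    (piMap_rTensor_comp_piRightHom pres.map) (piMap_rTensor_comp_piRightHom pres.π)
    (rTensor_exact _ hexact hπ)
    (.linearMap_piMap fun i ↦ rTensor_exact (M i) hexact hπ)
    (piRightHom_finsupp_bijective _).2 (piRightHom_finsupp_bijective _)
    (rTensor_surjective _ hπ)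
    (Function.Surjective.piMap fun i ↦ rTensor_surjective (M i) hπ)

end TensorProduct

lemma Module.Flat.pi_of_ideal_fg_finitePresentation {R : Type*} [CommRing R]
    (hcoh : ∀ I : Ideal R, I.FG → Module.FinitePresentation R I)
    {ι : Type*} {M : ι → Type*} [∀ i, AddCommGroup (M i)] [∀ i, Module R (M i)]
    [∀ i, Module.Flat R (M i)] : Module.Flat R (∀ i, M i) := by
  refine Module.Flat.iff_rTensor_injective.mpr fun I hI ↦ ?_
  have := hcoh I hI
  have hinj : Function.Injective ((piMap fun i ↦ I.subtype.rTensor (M i)) ∘ₗ piRightHom R R I M) :=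
    (Function.Injective.piMap fun i ↦ Module.Flat.rTensor_preserves_injective_linearMap _
      I.injective_subtype).comp (piRightHom_bijective_of_finitePresentation I).1
  rw [piMap_rTensor_comp_piRightHom, coe_comp] at hinj
  exact hinj.of_comp

lemma Module.Flat.linearMap_of_projective {R : Type*} [CommSemiring R] {Q P : Type*}
    [AddCommMonoid Q] [Module R Q] [AddCommMonoid P] [Module R P] [Module.Projective R Q]
    [Module.Flat R (Q → P)] : Module.Flat R (Q →ₗ[R] P) := by
  obtain ⟨s, hs⟩ := Module.projective_def.mp ‹Module.Projective R Q›
  have : Module.Flat R ((Q →₀ R) →ₗ[R] P) := .of_linearEquiv (Finsupp.llift P R R Q).symm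
  exact .of_retract (lcomp R P (Finsupp.linearCombination R id)) (lcomp R P s)
    (by ext g x; simp [hs x])

/-- Over a coherent commutative ring `R` (every finitely generated ideal is finitely
presented): (1) for `Q` a finitely generated projective `R`-module and `P` a flat
`R`-module, `Hom_R(Q, P)` is flat; (2) any product of flat `R`-modules is flat;
(3) hence `Hom_R(Q, P)` is flat for every projective `R`-module `Q` and flat `R`-module
`P`. -/
theorem coherent_hom_flat (R : Type u) [CommRing R]
    (hcoh : ∀ I : Ideal R, I.FG → Module.FinitePresentation R I) :
    (∀ (Q P : Type u) (_ : AddCommGroup Q) (_ : Module R Q) (_ : AddCommGroup P)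
        (_ : Module R P), Module.Finite R Q → Module.Projective R Q → Module.Flat R P →
        Module.Flat R (Q →ₗ[R] P)) ∧
    (∀ (ι : Type u) (M : ι → Type u) (_ : ∀ i, AddCommGroup (M i))
        (_ : ∀ i, Module R (M i)), (∀ i, Module.Flat R (M i)) →
        Module.Flat R (∀ i, M i)) ∧
    (∀ (Q P : Type u) (_ : AddCommGroup Q) (_ : Module R Q) (_ : AddCommGroup P)
        (_ : Module R P), Module.Projective R Q → Module.Flat R P →
        Module.Flat R (Q →ₗ[R] P)) := by
  have hpi : ∀ (ι : Type u) (M : ι → Type u) (_ : ∀ i, AddCommGroup (M i))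
      (_ : ∀ i, Module R (M i)), (∀ i, Module.Flat R (M i)) → Module.Flat R (∀ i, M i) :=
    fun _ _ _ _ _ ↦ .pi_of_ideal_fg_finitePresentation hcoh
  have hhom : ∀ (Q P : Type u) (_ : AddCommGroup Q) (_ : Module R Q) (_ : AddCommGroup P)
      (_ : Module R P), Module.Projective R Q → Module.Flat R P →
      Module.Flat R (Q →ₗ[R] P) := fun Q P _ _ _ _ _ _ ↦
    have : Module.Flat R (Q → P) := hpi Q (fun _ ↦ P) _ _ fun _ ↦ ‹_›
    .linearMap_of_projective
  exact ⟨fun Q P _ _ _ _ _ ↦ hhom Q P _ _ _ _, hpi, hhom⟩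
end
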